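/- If k is odd, then Σ_{w=0}^{ℓ-1} (w, q')² = k + Σ_{w=0}^{ℓ-1} (w, 0)², where q' = ℓ/2 and k = (q-1)/ℓ. -/

import Mathlib

/-- Cyclotomic number `(i, j)` with respect to generator `g` and divisor `ℓ`. -/
noncomputable def cyc {F : Type*} [Field F] [Fintype F] (g : Fˣ) (ℓ : ℕ) (i j : ℤ) : ℕ :=
  Nat.card {x : F // (∃ y : Fˣ, x = 1 + ((g ^ i * y ^ ℓ : Fˣ) : F)) ∧
    ∃ z : Fˣ, x = ((g ^ j * z ^ ℓ : Fˣ) : F)}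

/-!
Write `C j` for the cyclotomic class `g ^ j K`. The sum `∑ w, (w, j) ^ 2` counts the pairs
`(a, b) ∈ C j × C j` with `(a - 1) / (b - 1) ∈ K`. Since `k` is odd, `-1 = g ^ (ℓ k / 2)` lies in
`C (ℓ / 2)`, so the involution `(a, b) ↦ (-b (a - 1) / (b - 1), -a (b - 1) / (a - 1))`, which
preserves both `a b` and `(a - 1) / (b - 1)`, exchanges the pairs of class `ℓ / 2` with those of
class `0`. This breaks down only when `a b = 1`: no pair of class `0` has `a b = 1`, whereas the
pairs of class `ℓ / 2` with `a b = 1` are the `k` pairs `(a, a⁻¹)` with `a ∈ C (ℓ / 2)`.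
-/

open Finset Pointwise

lemma Finset.sum_sq_card_filter_eq_card_filter_product {α ι : Type*} (s : Finset α)
    (t : Finset ι) (P : ι → α → Prop) [∀ i, DecidablePred (P i)]
    (hP : ∀ x ∈ s, ∀ i ∈ t, ∀ i' ∈ t, P i x → P i' x → i = i') :
    ∑ i ∈ t, #(s.filter (P i)) ^ 2 = #((s ×ˢ s).filter fun p => ∃ i ∈ t, P i p.1 ∧ P i p.2) := by
  classical
  have hunion : (s ×ˢ s).filter (fun p => ∃ i ∈ t, P i p.1 ∧ P i p.2) =
      t.biUnion fun i => s.filter (P i) ×ˢ s.filter (P i) := by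
    ext p
    simp only [mem_filter, mem_product, mem_biUnion]
    constructor
    · rintro ⟨⟨h1, h2⟩, i, hi, hp1, hp2⟩; exact ⟨i, hi, ⟨h1, hp1⟩, h2, hp2⟩
    · rintro ⟨i, hi, ⟨h1, hp1⟩, h2, hp2⟩; exact ⟨⟨h1, h2⟩, i, hi, hp1, hp2⟩
  rw [hunion, card_biUnion]
  · simp only [card_product, sq]
  · intro i hi i' hi' hne
    refine disjoint_left.2 fun p hp hp' => hne ?_
    simp only [mem_product, mem_filter] at hp hp'
    exact hP p.1 hp.1.1 i hi i' hi' hp.1.2 hp'.1.2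

section PowCoset

variable {G : Type*} [CommGroup G] {g u v : G} {ℓ : ℕ} {i j : ℤ}

def powCoset (g : G) (ℓ : ℕ) (j : ℤ) : Set G := g ^ j • ((powMonoidHom ℓ : G →* G).range : Set G)

lemma mem_powCoset : u ∈ powCoset g ℓ j ↔ ∃ y, g ^ j * y ^ ℓ = u := by
  simp [powCoset, Set.mem_smul_set]

lemma mul_mem_powCoset (hu : u ∈ powCoset g ℓ i) (hv : v ∈ powCoset g ℓ j) :
    u * v ∈ powCoset g ℓ (i + j) := by
  obtain ⟨y, rfl⟩ := mem_powCoset.1 hu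
  obtain ⟨z, rfl⟩ := mem_powCoset.1 hv
  exact mem_powCoset.2 ⟨y * z, by rw [zpow_add, mul_pow, mul_mul_mul_comm]⟩

lemma inv_mem_powCoset (hu : u ∈ powCoset g ℓ j) : u⁻¹ ∈ powCoset g ℓ (-j) := by
  obtain ⟨y, rfl⟩ := mem_powCoset.1 hu
  exact mem_powCoset.2 ⟨y⁻¹, by rw [zpow_neg, inv_pow, mul_inv]⟩

lemma powCoset_congr (h : i ≡ j [ZMOD ℓ]) : powCoset g ℓ i = powCoset g ℓ j := by
  obtain ⟨m, hm⟩ := (Int.modEq_iff_dvd.1 h)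
  rw [powCoset, powCoset, show j = i + ℓ * m by omega, zpow_add, mul_smul,
    smul_coe_set (a := g ^ ((ℓ : ℤ) * m))
    (MonoidHom.mem_range.2 ⟨g ^ m, by simp [← zpow_natCast, ← zpow_mul, mul_comm]⟩)]

lemma modEq_of_mem_powCoset (hg : ∀ x, x ∈ Subgroup.zpowers g) (hℓ : ℓ ∣ orderOf g)
    (hi : u ∈ powCoset g ℓ i) (hj : u ∈ powCoset g ℓ j) : i ≡ j [ZMOD ℓ] := by
  obtain ⟨y, rfl⟩ := mem_powCoset.1 hi
  obtain ⟨z, hz⟩ := mem_powCoset.1 hj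
  obtain ⟨m, hm⟩ := Subgroup.mem_zpowers_iff.1 (hg (z / y))
  have : g ^ (i - j) = g ^ (m * ℓ) := by
    rw [zpow_mul, zpow_natCast, hm, zpow_sub, ← div_eq_mul_inv, div_pow,
      div_eq_div_iff_mul_eq_mul, ← hz, mul_comm]
  have hmod := (zpow_eq_zpow_iff_modEq.1 this).of_dvd (Int.natCast_dvd_natCast.2 hℓ)
  exact (Int.modEq_iff_dvd.2 <| Int.modEq_zero_iff_dvd.1 <|
    hmod.trans (Int.modEq_zero_iff_dvd.2 (dvd_mul_left _ _))).symm

lemma exists_lt_mem_powCoset (hg : ∀ x, x ∈ Subgroup.zpowers g) (hℓ0 : 0 < ℓ) (u : G) :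
    ∃ w < ℓ, u ∈ powCoset g ℓ w := by
  obtain ⟨m, rfl⟩ := Subgroup.mem_zpowers_iff.1 (hg u)
  have hlt := Int.emod_lt_of_pos m (Int.natCast_pos.2 hℓ0)
  refine ⟨(m % ℓ).toNat, by omega, ?_⟩
  rw [Int.toNat_of_nonneg (Int.emod_nonneg _ (by omega)),
    powCoset_congr (Int.mod_modEq m ℓ)]
  exact mem_powCoset.2 ⟨1, by simp⟩

lemma natCard_powCoset [IsCyclic G] [Finite G] {k : ℕ} (hG : Nat.card G = ℓ * k) (g : G) (j : ℤ) :
    Nat.card (powCoset g ℓ j) = k := by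
  have hℓ : 0 < ℓ := Nat.pos_of_mul_pos_right (hG ▸ Nat.card_pos)
  rw [powCoset, Set.natCard_smul_set, SetLike.coe_sort_coe, IsCyclic.card_powMonoidHom_range, hG,
    Nat.gcd_mul_right_left, Nat.mul_div_cancel_left _ hℓ]

end PowCoset

section CyclotomicClass

variable {F : Type*} [Field F] {g : Fˣ} {ℓ k : ℕ} {i j : ℤ} {x y : F}

def cyclotomicClass (g : Fˣ) (ℓ : ℕ) (j : ℤ) : Set F := Units.val '' powCoset g ℓ j

lemma mem_cyclotomicClass :
    x ∈ cyclotomicClass g ℓ j ↔ ∃ y : Fˣ, ((g ^ j * y ^ ℓ : Fˣ) : F) = x := by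
  simp [cyclotomicClass, mem_powCoset]

lemma ne_zero_of_mem_cyclotomicClass (hx : x ∈ cyclotomicClass g ℓ j) : x ≠ 0 := by
  obtain ⟨u, -, rfl⟩ := hx
  exact u.ne_zero

lemma mul_mem_cyclotomicClass (hx : x ∈ cyclotomicClass g ℓ i) (hy : y ∈ cyclotomicClass g ℓ j) :
    x * y ∈ cyclotomicClass g ℓ (i + j) := by
  obtain ⟨u, hu, rfl⟩ := hx
  obtain ⟨v, hv, rfl⟩ := hy
  exact ⟨u * v, mul_mem_powCoset hu hv, Units.val_mul u v⟩

lemma inv_mem_cyclotomicClass (hx : x ∈ cyclotomicClass g ℓ j) :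
    x⁻¹ ∈ cyclotomicClass g ℓ (-j) := by
  obtain ⟨u, hu, rfl⟩ := hx
  exact ⟨u⁻¹, inv_mem_powCoset hu, Units.val_inv_eq_inv_val u⟩

lemma div_mem_cyclotomicClass (hx : x ∈ cyclotomicClass g ℓ i) (hy : y ∈ cyclotomicClass g ℓ j) :
    x / y ∈ cyclotomicClass g ℓ (i - j) := by
  rw [div_eq_mul_inv, sub_eq_add_neg]
  exact mul_mem_cyclotomicClass hx (inv_mem_cyclotomicClass hy)

lemma cyclotomicClass_congr (h : i ≡ j [ZMOD ℓ]) :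
    cyclotomicClass g ℓ i = (cyclotomicClass g ℓ j : Set F) := by
  rw [cyclotomicClass, cyclotomicClass, powCoset_congr h]

lemma modEq_of_mem_cyclotomicClass (hg : ∀ x, x ∈ Subgroup.zpowers g) (hℓ : ℓ ∣ orderOf g)
    (hi : x ∈ cyclotomicClass g ℓ i) (hj : x ∈ cyclotomicClass g ℓ j) : i ≡ j [ZMOD ℓ] := by
  obtain ⟨u, hu, rfl⟩ := hi
  obtain ⟨v, hv, huv⟩ := hj
  rw [Units.val_inj] at huv
  exact modEq_of_mem_powCoset hg hℓ hu (huv ▸ hv)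

lemma exists_lt_mem_cyclotomicClass (hg : ∀ x, x ∈ Subgroup.zpowers g) (hℓ0 : 0 < ℓ)
    (hx : x ≠ 0) : ∃ w < ℓ, x ∈ cyclotomicClass g ℓ w := by
  obtain ⟨w, hw, hu⟩ := exists_lt_mem_powCoset hg hℓ0 (Units.mk0 x hx)
  exact ⟨w, hw, _, hu, rfl⟩

lemma natCard_cyclotomicClass [Finite F] (hF : Nat.card Fˣ = ℓ * k) (g : Fˣ) (j : ℤ) :
    Nat.card (cyclotomicClass g ℓ j) = k := by
  rw [cyclotomicClass, Nat.card_image_of_injective Units.val_injective, natCard_powCoset hF]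

-- `-1` is the element of order `2` of the cyclic group `⟨g⟩`, namely
-- `g ^ (ℓ k / 2) = g ^ (ℓ / 2) * (g ^ (k / 2)) ^ ℓ`.
lemma neg_one_mem_cyclotomicClass_half (ho : orderOf g = ℓ * k) (hℓ : Even ℓ) (hℓ0 : 0 < ℓ)
    (hk : Odd k) : (-1 : F) ∈ cyclotomicClass g ℓ (ℓ / 2 : ℕ) := by
  obtain ⟨a, rfl⟩ := hℓ
  obtain ⟨b, rfl⟩ := hk
  have hhalf : (a + a) / 2 = a := by omega
  have hprim : IsPrimitiveRoot ((g : F) ^ (a * (2 * b + 1))) 2 := by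
    have := (IsPrimitiveRoot.orderOf (g : F)).pow_of_dvd (p := a * (2 * b + 1))
      (Nat.mul_ne_zero (by omega) (by omega)) (by rw [orderOf_units, ho]; exact ⟨2, by ring⟩)
    rwa [orderOf_units, ho, show (a + a) * (2 * b + 1) = a * (2 * b + 1) * 2 by ring,
      Nat.mul_div_cancel_left _ (Nat.mul_pos (by omega) (by omega))] at this
  refine mem_cyclotomicClass.2 ⟨g ^ b, ?_⟩
  rw [hhalf, ← hprim.eq_neg_one_of_two_right, zpow_natCast, ← pow_mul, ← pow_add]
  push_cast
  ring

lemma exists_mem_cyclotomicClass_iff_div_mem (hg : ∀ x, x ∈ Subgroup.zpowers g) (hℓ0 : 0 < ℓ)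
    {x y : F} : (∃ w ∈ range ℓ, x ∈ cyclotomicClass g ℓ w ∧ y ∈ cyclotomicClass g ℓ w) ↔
      x / y ∈ cyclotomicClass g ℓ 0 := by
  constructor
  · rintro ⟨w, -, hx, hy⟩
    simpa using div_mem_cyclotomicClass hx hy
  · intro hxy
    have hy : y ≠ 0 := by
      rintro rfl
      exact ne_zero_of_mem_cyclotomicClass (by simpa using hxy) rfl
    obtain ⟨w, hw, hyw⟩ := exists_lt_mem_cyclotomicClass hg hℓ0 hy
    refine ⟨w, mem_range.2 hw, ?_, hyw⟩
    simpa [div_mul_cancel₀ _ hy] using mul_mem_cyclotomicClass hxy hyw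

end CyclotomicClass

section Twist

variable {F : Type*} [Field F] {a : F} {p : F × F}

def cyclotomicTwist (p : F × F) : F × F :=
  (-p.2 * ((p.1 - 1) / (p.2 - 1)), -p.1 * ((p.2 - 1) / (p.1 - 1)))

lemma cyclotomicTwist_fst_mul_snd (h1 : p.1 - 1 ≠ 0) (h2 : p.2 - 1 ≠ 0) :
    (cyclotomicTwist p).1 * (cyclotomicTwist p).2 = p.1 * p.2 := by
  simp only [cyclotomicTwist]
  field_simp

lemma cyclotomicTwist_div (h1 : p.1 - 1 ≠ 0) (h2 : p.2 - 1 ≠ 0) (h12 : p.1 * p.2 ≠ 1) :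
    ((cyclotomicTwist p).1 - 1) / ((cyclotomicTwist p).2 - 1) = (p.1 - 1) / (p.2 - 1) := by
  have h12' : 1 - p.1 * p.2 ≠ 0 := sub_ne_zero.2 (Ne.symm h12)
  have hfst : (cyclotomicTwist p).1 - 1 = (1 - p.1 * p.2) / (p.2 - 1) := by
    simp only [cyclotomicTwist]; field_simp; ring
  have hsnd : (cyclotomicTwist p).2 - 1 = (1 - p.1 * p.2) / (p.1 - 1) := by
    simp only [cyclotomicTwist]; field_simp; ring
  rw [hfst, hsnd]
  field_simp

lemma cyclotomicTwist_cyclotomicTwist (h1 : p.1 - 1 ≠ 0) (h2 : p.2 - 1 ≠ 0) (h12 : p.1 * p.2 ≠ 1) :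
    cyclotomicTwist (cyclotomicTwist p) = p := by
  have hdiv := cyclotomicTwist_div h1 h2 h12
  have hdiv' :
      ((cyclotomicTwist p).2 - 1) / ((cyclotomicTwist p).1 - 1) = (p.2 - 1) / (p.1 - 1) := by
    rw [← inv_div, hdiv, inv_div]
  ext
  · rw [cyclotomicTwist, hdiv]; simp only [cyclotomicTwist]; field_simp
  · rw [cyclotomicTwist, hdiv']; simp only [cyclotomicTwist]; field_simp

lemma sub_one_div_inv_sub_one (ha0 : a ≠ 0) (ha1 : a ≠ 1) : (a - 1) / (a⁻¹ - 1) = -a := by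
  have : a⁻¹ - 1 ≠ 0 := sub_ne_zero.2 (inv_ne_one.2 ha1)
  field_simp
  ring

end Twist

section CyclotomicPairs

open Classical

variable {F : Type*} [Field F] [Fintype F] {g : Fˣ} {ℓ : ℕ} {j h : ℤ} {p : F × F}

local notation "C" => cyclotomicClass g ℓ

lemma cyc_eq_card_filter (g : Fˣ) (ℓ : ℕ) (i j : ℤ) :
    cyc g ℓ i j = #{x : F | x - 1 ∈ cyclotomicClass g ℓ i ∧ x ∈ cyclotomicClass g ℓ j} := by
  rw [cyc, Nat.card_eq_fintype_card, Fintype.card_subtype]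
  congr 1
  ext x
  simp only [mem_filter, mem_univ, true_and, mem_cyclotomicClass, eq_sub_iff_add_eq, add_comm,
    eq_comm]

-- Since `x / 0 = 0 ∉ C 0`, membership also forces `p.1 ≠ 1` and `p.2 ≠ 1`.
noncomputable def cyclotomicPairs (g : Fˣ) (ℓ : ℕ) (j : ℤ) : Finset (F × F) :=
  {p | p.1 ∈ cyclotomicClass g ℓ j ∧ p.2 ∈ cyclotomicClass g ℓ j ∧
    (p.1 - 1) / (p.2 - 1) ∈ cyclotomicClass g ℓ 0}

lemma sum_sq_cyc_eq_card_cyclotomicPairs (hg : ∀ x, x ∈ Subgroup.zpowers g)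
    (hℓ : ℓ ∣ orderOf g) (hℓ0 : 0 < ℓ) (j : ℤ) :
    ∑ w ∈ range ℓ, cyc g ℓ w j ^ 2 = #(cyclotomicPairs g ℓ j) := by
  have hunique : ∀ x ∈ ({x | x ∈ C j} : Finset F), ∀ w ∈ range ℓ, ∀ w' ∈ range ℓ,
      x - 1 ∈ C w → x - 1 ∈ C w' → w = w' := by
    intro x _ w hw w' hw' hxw hxw'
    exact Nat.ModEq.eq_of_lt_of_lt
      (Int.natCast_modEq_iff.1 (modEq_of_mem_cyclotomicClass hg hℓ hxw hxw'))
      (mem_range.1 hw) (mem_range.1 hw')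
  convert sum_sq_card_filter_eq_card_filter_product _ _ _ hunique using 2 with w
  · rw [cyc_eq_card_filter, filter_filter]
    simp only [and_comm]
  · ext p
    simp only [cyclotomicPairs, mem_filter, mem_univ, mem_product, true_and,
      exists_mem_cyclotomicClass_iff_div_mem hg hℓ0, and_assoc]

lemma mem_cyclotomicPairs :
    p ∈ cyclotomicPairs g ℓ j ↔ p.1 ∈ C j ∧ p.2 ∈ C j ∧ (p.1 - 1) / (p.2 - 1) ∈ C 0 := by
  simp [cyclotomicPairs]

lemma sub_one_ne_zero_of_mem_cyclotomicPairs (hp : p ∈ cyclotomicPairs g ℓ j) :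
    p.1 - 1 ≠ 0 ∧ p.2 - 1 ≠ 0 :=
  div_ne_zero_iff.1 (ne_zero_of_mem_cyclotomicClass (mem_cyclotomicPairs.1 hp).2.2)

lemma cyclotomicTwist_mem_cyclotomicPairs (hneg : (-1 : F) ∈ C h)
    (hp : p ∈ cyclotomicPairs g ℓ j) (h12 : p.1 * p.2 ≠ 1) :
    cyclotomicTwist p ∈ cyclotomicPairs g ℓ (j + h) := by
  obtain ⟨h1, h2⟩ := sub_one_ne_zero_of_mem_cyclotomicPairs hp
  obtain ⟨ha, hb, hr⟩ := mem_cyclotomicPairs.1 hp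
  refine mem_cyclotomicPairs.2 ⟨?_, ?_, ?_⟩
  · have := mul_mem_cyclotomicClass (mul_mem_cyclotomicClass hneg hb) hr
    rwa [neg_one_mul, add_zero, add_comm] at this
  · have := mul_mem_cyclotomicClass (mul_mem_cyclotomicClass hneg ha) (inv_mem_cyclotomicClass hr)
    rwa [neg_one_mul, neg_zero, add_zero, add_comm, inv_div] at this
  · rwa [cyclotomicTwist_div h1 h2 h12]

lemma neg_one_mem_of_mem_cyclotomicPairs_of_mul_eq_one (hp : p ∈ cyclotomicPairs g ℓ j)
    (h12 : p.1 * p.2 = 1) : (-1 : F) ∈ C (-j) := by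
  obtain ⟨h1, -⟩ := sub_one_ne_zero_of_mem_cyclotomicPairs hp
  obtain ⟨ha, -, hr⟩ := mem_cyclotomicPairs.1 hp
  have ha0 := ne_zero_of_mem_cyclotomicClass ha
  rw [eq_inv_of_mul_eq_one_right h12, sub_one_div_inv_sub_one ha0 (sub_ne_zero.1 h1)] at hr
  simpa [neg_div_self ha0] using div_mem_cyclotomicClass hr ha

lemma mul_ne_one_of_mem_cyclotomicPairs_zero (hneg0 : (-1 : F) ∉ C 0)
    (hp : p ∈ cyclotomicPairs g ℓ 0) : p.1 * p.2 ≠ 1 := fun h12 =>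
  hneg0 (by simpa using neg_one_mem_of_mem_cyclotomicPairs_of_mul_eq_one hp h12)

lemma card_filter_mul_ne_one_cyclotomicPairs (hneg : (-1 : F) ∈ C h) (hh : h + h ≡ 0 [ZMOD ℓ])
    (hneg0 : (-1 : F) ∉ C 0) :
    #{p ∈ cyclotomicPairs g ℓ h | p.1 * p.2 ≠ 1} = #(cyclotomicPairs (F := F) g ℓ 0) := by
  have hT : cyclotomicPairs g ℓ (h + h) = cyclotomicPairs (F := F) g ℓ 0 := by
    simp only [cyclotomicPairs, cyclotomicClass_congr hh]
  have hinv {j : ℤ} {p : F × F} (hp : p ∈ cyclotomicPairs g ℓ j) (h12 : p.1 * p.2 ≠ 1) :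
      cyclotomicTwist (cyclotomicTwist p) = p :=
    cyclotomicTwist_cyclotomicTwist (sub_one_ne_zero_of_mem_cyclotomicPairs hp).1
      (sub_one_ne_zero_of_mem_cyclotomicPairs hp).2 h12
  apply card_nbij' cyclotomicTwist cyclotomicTwist
  · intro p hp
    rw [coe_filter] at hp
    rw [mem_coe, ← hT]
    exact cyclotomicTwist_mem_cyclotomicPairs hneg hp.1 hp.2
  · intro p hp
    have h12 := mul_ne_one_of_mem_cyclotomicPairs_zero hneg0 hp
    have hmem := cyclotomicTwist_mem_cyclotomicPairs hneg hp h12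
    rw [zero_add] at hmem
    rw [coe_filter]
    exact ⟨hmem, by rwa [cyclotomicTwist_fst_mul_snd (sub_one_ne_zero_of_mem_cyclotomicPairs hp).1
      (sub_one_ne_zero_of_mem_cyclotomicPairs hp).2]⟩
  · intro p hp
    rw [coe_filter] at hp
    exact hinv hp.1 hp.2
  · intro p hp
    exact hinv hp (mul_ne_one_of_mem_cyclotomicPairs_zero hneg0 hp)

lemma card_filter_mul_eq_one_cyclotomicPairs (hneg : (-1 : F) ∈ C h) (hh : h + h ≡ 0 [ZMOD ℓ])
    (hneg0 : (-1 : F) ∉ C 0) :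
    #{p ∈ cyclotomicPairs g ℓ h | p.1 * p.2 = 1} = Nat.card (C h) := by
  have hneg_h : -h ≡ h [ZMOD ℓ] := by simpa using (hh.add_right (-h)).symm
  rw [Nat.card_eq_card_toFinset]
  apply card_nbij' Prod.fst (fun a => (a, a⁻¹))
  · intro p hp
    rw [coe_filter] at hp
    exact Set.mem_toFinset.2 (mem_cyclotomicPairs.1 hp.1).1
  · intro a ha
    rw [Set.coe_toFinset] at ha
    have ha0 := ne_zero_of_mem_cyclotomicClass ha
    have ha1 : a ≠ 1 := by
      rintro rfl
      exact hneg0 (by simpa using div_mem_cyclotomicClass hneg ha)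
    rw [coe_filter]
    refine ⟨mem_cyclotomicPairs.2 ⟨ha, ?_, ?_⟩, mul_inv_cancel₀ ha0⟩
    · rw [← cyclotomicClass_congr hneg_h]
      exact inv_mem_cyclotomicClass ha
    · rw [sub_one_div_inv_sub_one ha0 ha1, ← cyclotomicClass_congr hh, ← neg_one_mul]
      exact mul_mem_cyclotomicClass hneg ha
  · intro p hp
    rw [coe_filter] at hp
    exact Prod.ext rfl (eq_inv_of_mul_eq_one_right hp.2).symm
  · intro a _
    rfl

lemma card_cyclotomicPairs_of_neg_one_mem (hneg : (-1 : F) ∈ C h) (hh : h + h ≡ 0 [ZMOD ℓ])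
    (hneg0 : (-1 : F) ∉ C 0) :
    #(cyclotomicPairs g ℓ h) = Nat.card (C h) + #(cyclotomicPairs (F := F) g ℓ 0) := by
  rw [← card_filter_add_card_filter_not (fun p : F × F => p.1 * p.2 = 1),
    card_filter_mul_eq_one_cyclotomicPairs hneg hh hneg0,
    card_filter_mul_ne_one_cyclotomicPairs hneg hh hneg0]

end CyclotomicPairs

lemma half_not_modEq_zero {ℓ : ℕ} (hℓ : Even ℓ) (hℓ0 : 0 < ℓ) :
    ¬ ((ℓ / 2 : ℕ) : ℤ) ≡ 0 [ZMOD ℓ] := by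
  obtain ⟨a, rfl⟩ := hℓ
  intro h
  have := Nat.le_of_dvd (by omega) (Int.natCast_dvd_natCast.1 (Int.modEq_zero_iff_dvd.1 h))
  omega

lemma half_add_half_modEq_zero {ℓ : ℕ} (hℓ : Even ℓ) :
    ((ℓ / 2 : ℕ) : ℤ) + ((ℓ / 2 : ℕ) : ℤ) ≡ 0 [ZMOD ℓ] := by
  obtain ⟨a, rfl⟩ := hℓ
  rw [show (a + a) / 2 = a by omega]
  push_cast
  exact Int.emod_self

theorem cyc_halfcolumn_sq_sum {F : Type*} [Field F] [Fintype F] (g : Fˣ) (ℓ : ℕ)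
    (hg : ∀ x : Fˣ, x ∈ Subgroup.zpowers g)
    (hodd : Odd (Fintype.card F)) (hℓ : ℓ ∣ Fintype.card F - 1)
    (k : ℕ) (hk : k = (Fintype.card F - 1) / ℓ) (hkodd : Odd k) :
    ∑ w ∈ Finset.range ℓ, (cyc g ℓ (w : ℤ) ((ℓ / 2 : ℕ) : ℤ)) ^ 2 =
      k + ∑ w ∈ Finset.range ℓ, (cyc g ℓ (w : ℤ) 0) ^ 2 := by
  have hq : Fintype.card F - 1 = ℓ * k := by rw [hk, Nat.mul_div_cancel' hℓ]
  have hcard : Nat.card Fˣ = ℓ * k := by rw [Nat.card_units, Nat.card_eq_fintype_card, hq]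
  have ho : orderOf g = ℓ * k := (orderOf_eq_card_of_forall_mem_zpowers hg).trans hcard
  have hℓ0 : 0 < ℓ := Nat.pos_of_mul_pos_right (ho ▸ orderOf_pos g)
  have hℓo : ℓ ∣ orderOf g := ho ▸ dvd_mul_right ℓ k
  have hℓ2 : Even ℓ := by
    have : Even (ℓ * k) := hq ▸ hodd.tsub_odd odd_one
    exact (Nat.even_mul.1 this).resolve_right (Nat.not_even_iff_odd.2 hkodd)
  have hneg := neg_one_mem_cyclotomicClass_half (F := F) ho hℓ2 hℓ0 hkodd
  have hneg0 : (-1 : F) ∉ cyclotomicClass g ℓ 0 := fun h => half_not_modEq_zero hℓ2 hℓ0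
    (modEq_of_mem_cyclotomicClass hg hℓo hneg h)
  rw [sum_sq_cyc_eq_card_cyclotomicPairs hg hℓo hℓ0, sum_sq_cyc_eq_card_cyclotomicPairs hg hℓo hℓ0,
    card_cyclotomicPairs_of_neg_one_mem hneg (half_add_half_modEq_zero hℓ2) hneg0,
    natCard_cyclotomicClass hcard]
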